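/- Assume Σ_{n≥1} ‖E₀(S_n)‖ / n^{3/2} < ∞. Then there is a universal constant c > 0 such that for every positive integer a, (1/√a) · Σ_{k=1}^{∞} ‖E₀(S_{ak})‖ / k^{3/2} ≤ c · Σ_{l≥a} ‖E₀(S_l)‖ / l^{3/2}. -/

import Mathlib

/-!
Write `h n = ‖E₀ S_n‖`. Since `S_{n+m} = S_n + S_m ∘ Tⁿ`, and conditioning `S_m ∘ Tⁿ` first on
`T⁻ⁿ 𝓕₀ ⊇ 𝓕₀` gives `E₀(S_m) ∘ Tⁿ`, whose norm is that of `E₀ S_m`, the sequence satisfies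
`h n ≤ h (n + m) + h m`. Averaging this over `m ∈ [a, 2a)` bounds `a h(ak)` by a block of `a`
values `h l` with `l ∈ [a(k+1), a(k+2)) ⊆ [ak, 3ak]` plus the fixed block `∑_{a ≤ l < 2a} h l`.
Weighting by `(ak)^{-3/2}` and summing over `k`, the first blocks are disjoint and contribute at
most `3^{3/2} ∑_{l ≥ a} h l / l^{3/2}`, the fixed block at most `2^{3/2} ζ(3/2)` times that sum.
-/

open MeasureTheory Finset
open scoped ENNReal

namespace MeasureTheory

variable {Ω Ω' : Type*} {n mΩ : MeasurableSpace Ω} {m mΩ' : MeasurableSpace Ω'}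
  {μ : Measure Ω} {ν : Measure Ω'}

theorem MeasurePreserving.setIntegral_preimage {E : Type*} [NormedAddCommGroup E]
    [NormedSpace ℝ E] {φ : Ω → Ω'} (hφ : MeasurePreserving φ μ ν) {g : Ω' → E}
    (hg : AEStronglyMeasurable g ν) {s : Set Ω'} (hs : MeasurableSet s) :
    ∫ x in φ ⁻¹' s, g (φ x) ∂μ = ∫ y in s, g y ∂ν := by
  rw [← hφ.map_eq] at hg ⊢
  exact (setIntegral_map hs hg hφ.aemeasurable).symm

theorem MeasurePreserving.condExp_comp_ae_eq [IsFiniteMeasure μ] [IsFiniteMeasure ν]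
    {φ : Ω → Ω'} (hφ : MeasurePreserving φ μ ν) (hm : m ≤ mΩ') {f : Ω' → ℝ}
    (hf : Integrable f ν) : μ[f ∘ φ | m.comap φ] =ᵐ[μ] ν[f | m] ∘ φ := by
  have hcomap : m.comap φ ≤ mΩ := (MeasurableSpace.comap_mono hm).trans hφ.measurable.comap_le
  refine (ae_eq_condExp_of_forall_setIntegral_eq hcomap (hφ.integrable_comp_of_integrable hf)
    (fun s _ _ => (hφ.integrable_comp_of_integrable integrable_condExp).integrableOn) ?_ ?_).symm
  · rintro _ ⟨s, hs, rfl⟩ _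
    simp only [Function.comp_apply]
    rw [hφ.setIntegral_preimage integrable_condExp.1 (hm s hs),
      hφ.setIntegral_preimage hf.1 (hm s hs), setIntegral_condExp hm hf hs]
  · exact (stronglyMeasurable_condExp.comp_measurable
      (Measurable.of_comap_le le_rfl)).aestronglyMeasurable

theorem MeasurePreserving.eLpNorm_condExp_comp_le [IsFiniteMeasure μ] [IsFiniteMeasure ν]
    {φ : Ω → Ω'} (hφ : MeasurePreserving φ μ ν) (hm : m ≤ mΩ') (hn : n ≤ m.comap φ)
    {f : Ω' → ℝ} (hf : Integrable f ν) {p : ℝ≥0∞} (hp : 1 ≤ p) :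
    eLpNorm (μ[f ∘ φ | n]) p μ ≤ eLpNorm (ν[f | m]) p ν := by
  have hcomap : m.comap φ ≤ mΩ := (MeasurableSpace.comap_mono hm).trans hφ.measurable.comap_le
  calc eLpNorm (μ[f ∘ φ | n]) p μ = eLpNorm (μ[μ[f ∘ φ | m.comap φ] | n]) p μ :=
        eLpNorm_congr_ae (condExp_condExp_of_le hn hcomap).symm
    _ ≤ eLpNorm (μ[f ∘ φ | m.comap φ]) p μ := eLpNorm_condExp_le_eLpNorm _ hp
    _ = eLpNorm (ν[f | m] ∘ φ) p μ := eLpNorm_congr_ae (hφ.condExp_comp_ae_eq hm hf)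
    _ = eLpNorm (ν[f | m]) p ν :=
        eLpNorm_comp_measurePreserving integrable_condExp.aestronglyMeasurable hφ

theorem Integrable.birkhoffSum {φ : Ω → Ω} (hφ : MeasurePreserving φ μ μ) {g : Ω → ℝ}
    (hg : Integrable g μ) (k : ℕ) : Integrable (birkhoffSum φ g k) μ :=
  integrable_finsetSum (range k) fun i _ => (hφ.iterate i).integrable_comp_of_integrable hg

theorem MemLp.birkhoffSum {φ : Ω → Ω} (hφ : MeasurePreserving φ μ μ) {p : ℝ≥0∞} {g : Ω → ℝ}
    (hg : MemLp g p μ) (k : ℕ) : MemLp (birkhoffSum φ g k) p μ :=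
  memLp_finsetSum (range k) fun i _ => hg.comp_measurePreserving (hφ.iterate i)

theorem _root_.MeasurableSpace.le_comap_iterate {φ : Ω → Ω} (hn : n ≤ n.comap φ) (k : ℕ) :
    n ≤ n.comap φ^[k] := by
  induction k with
  | zero => simp
  | succ k ih =>
    rw [Function.iterate_succ, ← MeasurableSpace.comap_comp]
    exact hn.trans (MeasurableSpace.comap_mono ih)

theorem eLpNorm_condExp_birkhoffSum_le [IsFiniteMeasure μ] {φ : Ω → Ω}
    (hφ : MeasurePreserving φ μ μ) (hn : n ≤ mΩ) (hnφ : n ≤ n.comap φ) {p : ℝ≥0∞} (hp : 1 ≤ p)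
    {g : Ω → ℝ} (hg : Integrable g μ) (j k : ℕ) :
    eLpNorm (μ[birkhoffSum φ g j | n]) p μ ≤
      eLpNorm (μ[birkhoffSum φ g (j + k) | n]) p μ + eLpNorm (μ[birkhoffSum φ g k | n]) p μ := by
  have hint (i : ℕ) : Integrable (birkhoffSum φ g i) μ := hg.birkhoffSum hφ i
  have hsplit : μ[birkhoffSum φ g (j + k) | n] =ᵐ[μ]
      μ[birkhoffSum φ g j | n] + μ[birkhoffSum φ g k ∘ φ^[j] | n] := by
    rw [show birkhoffSum φ g (j + k) = birkhoffSum φ g j + birkhoffSum φ g k ∘ φ^[j] from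
      funext (birkhoffSum_add φ g j k)]
    exact condExp_add (hint j) ((hφ.iterate j).integrable_comp_of_integrable (hint k)) n
  calc eLpNorm (μ[birkhoffSum φ g j | n]) p μ
      = eLpNorm (μ[birkhoffSum φ g (j + k) | n] - μ[birkhoffSum φ g k ∘ φ^[j] | n]) p μ :=
        eLpNorm_congr_ae (by filter_upwards [hsplit] with x hx; simp [hx])
    _ ≤ eLpNorm (μ[birkhoffSum φ g (j + k) | n]) p μ +
        eLpNorm (μ[birkhoffSum φ g k ∘ φ^[j] | n]) p μ :=
        eLpNorm_sub_le integrable_condExp.1 integrable_condExp.1 hp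
    _ ≤ _ := by
        gcongr
        exact (hφ.iterate j).eLpNorm_condExp_comp_le hn
          (MeasurableSpace.le_comap_iterate hnφ j) (hint k) hp

theorem toReal_eLpNorm_condExp_birkhoffSum_le [IsFiniteMeasure μ] {φ : Ω → Ω}
    (hφ : MeasurePreserving φ μ μ) (hn : n ≤ mΩ) (hnφ : n ≤ n.comap φ) {p : ℝ≥0∞} (hp : 1 ≤ p)
    {g : Ω → ℝ} (hg : MemLp g p μ) (j k : ℕ) :
    (eLpNorm (μ[birkhoffSum φ g j | n]) p μ).toReal ≤
      (eLpNorm (μ[birkhoffSum φ g (j + k) | n]) p μ).toReal +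
        (eLpNorm (μ[birkhoffSum φ g k | n]) p μ).toReal :=
  ENNReal.toReal_le_add (eLpNorm_condExp_birkhoffSum_le hφ hn hnφ hp (hg.integrable hp) j k)
    ((hg.birkhoffSum hφ _).condExp hp).eLpNorm_ne_top
    ((hg.birkhoffSum hφ _).condExp hp).eLpNorm_ne_top

end MeasureTheory

lemma div_rpow_le_mul_div_rpow {u x y c p : ℝ} (hu : 0 ≤ u) (hp : 0 ≤ p) (hx : 0 < x)
    (hy : 0 < y) (hyx : y ≤ c * x) : u / x ^ p ≤ c ^ p * (u / y ^ p) := by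
  have hc : 0 < c := pos_of_mul_pos_left (hy.trans_le hyx) hx.le
  have hcx : y ^ p ≤ c ^ p * x ^ p := by
    rw [← Real.mul_rpow hc.le hx.le]
    exact Real.rpow_le_rpow hy.le hyx hp
  calc u / x ^ p = c ^ p * (u / (c ^ p * x ^ p)) := by field_simp
    _ ≤ c ^ p * (u / y ^ p) := by gcongr

lemma HasSum.sum_range_mul_add {M : Type*} [AddCommMonoid M] [TopologicalSpace M]
    [ContinuousAdd M] [RegularSpace M] {v : ℕ → M} {s : M} (hv : HasSum v s) (a : ℕ) [NeZero a] :
    HasSum (fun k => ∑ i ∈ range a, v (k * a + i)) s := by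
  have := ((Nat.divModEquiv a).symm.hasSum_iff.mpr hv).prod_fiberwise
    fun k => hasSum_fintype _
  convert this using 2 with k
  simp [Fin.sum_univ_eq_sum_range fun i => v (k * a + i)]

section WeightedBlockSums

variable {h : ℕ → ℝ} {p : ℝ}

lemma mul_le_sum_add_sum (hsub : ∀ n m, h n ≤ h (n + m) + h m) (n m a : ℕ) :
    a * h n ≤ ∑ i ∈ range a, h (n + (m + i)) + ∑ i ∈ range a, h (m + i) := by
  calc a * h n = ∑ _i ∈ range a, h n := by simp
    _ ≤ ∑ i ∈ range a, (h (n + (m + i)) + h (m + i)) := sum_le_sum fun i _ => hsub n (m + i)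
    _ = _ := sum_add_distrib

lemma mul_div_rpow_le_of_le_add (h0 : 0 ≤ h) (hsub : ∀ n m, h n ≤ h (n + m) + h m) (hp : 0 ≤ p)
    {a : ℕ} (ha : 0 < a) (k : ℕ) :
    1 / (a : ℝ) ^ (p - 1) * (h (a * (k + 1)) / ((k : ℝ) + 1) ^ p) ≤
      3 ^ p * ∑ i ∈ range a, h (a + ((k + 1) * a + i)) / ((a : ℝ) + ↑((k + 1) * a + i)) ^ p +
        2 ^ p * (∑ i ∈ range a, h (a + i) / ((a : ℝ) + i) ^ p) * (1 / ((k : ℝ) + 1) ^ p) := by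
  have ha' : (0 : ℝ) < a := Nat.cast_pos.mpr ha
  set x : ℝ := a * (k + 1) with hx_def
  have hx : 0 < x := by positivity
  have hlhs : 1 / (a : ℝ) ^ (p - 1) * (h (a * (k + 1)) / ((k : ℝ) + 1) ^ p) =
      a * h (a * (k + 1)) / x ^ p := by
    rw [Real.rpow_sub_one ha'.ne', hx_def, Real.mul_rpow ha'.le (by positivity)]
    field_simp
  have hfar (i : ℕ) (hi : i ∈ range a) : h (a * (k + 1) + (a + i)) / x ^ p ≤
      3 ^ p * (h (a + ((k + 1) * a + i)) / ((a : ℝ) + ↑((k + 1) * a + i)) ^ p) := by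
    rw [show a * (k + 1) + (a + i) = a + ((k + 1) * a + i) by ring]
    refine div_rpow_le_mul_div_rpow (h0 _) hp hx (by positivity) ?_
    have : (i : ℝ) ≤ a := by exact_mod_cast (mem_range.mp hi).le
    push_cast
    nlinarith [(k.cast_nonneg : (0 : ℝ) ≤ k)]
  have hnear (i : ℕ) (hi : i ∈ range a) : h (a + i) / x ^ p ≤
      (2 / ((k : ℝ) + 1)) ^ p * (h (a + i) / ((a : ℝ) + i) ^ p) := by
    refine div_rpow_le_mul_div_rpow (h0 _) hp hx (by positivity) ?_
    have : (i : ℝ) ≤ a := by exact_mod_cast (mem_range.mp hi).le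
    rw [hx_def, show 2 / ((k : ℝ) + 1) * (a * (k + 1)) = 2 * a by field_simp]
    linarith
  calc 1 / (a : ℝ) ^ (p - 1) * (h (a * (k + 1)) / ((k : ℝ) + 1) ^ p)
      = a * h (a * (k + 1)) / x ^ p := hlhs
    _ ≤ (∑ i ∈ range a, h (a * (k + 1) + (a + i)) + ∑ i ∈ range a, h (a + i)) / x ^ p := by
      gcongr
      exact mul_le_sum_add_sum hsub _ _ _
    _ = ∑ i ∈ range a, h (a * (k + 1) + (a + i)) / x ^ p +
        ∑ i ∈ range a, h (a + i) / x ^ p := by rw [add_div, sum_div, sum_div]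
    _ ≤ ∑ i ∈ range a, 3 ^ p * (h (a + ((k + 1) * a + i)) / ((a : ℝ) + ↑((k + 1) * a + i)) ^ p) +
        ∑ i ∈ range a, (2 / ((k : ℝ) + 1)) ^ p * (h (a + i) / ((a : ℝ) + i) ^ p) :=
      add_le_add (sum_le_sum hfar) (sum_le_sum hnear)
    _ = _ := by
      rw [← mul_sum, ← mul_sum, Real.div_rpow (by norm_num) (by positivity)]
      ring

theorem tsum_mul_div_rpow_le_of_le_add (h0 : 0 ≤ h) (hsub : ∀ n m, h n ≤ h (n + m) + h m)
    (hp : 1 < p) (hsum : Summable fun n : ℕ => h (n + 1) / ((n : ℝ) + 1) ^ p) {a : ℕ} (ha : 1 ≤ a) :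
    1 / (a : ℝ) ^ (p - 1) * ∑' k : ℕ, h (a * (k + 1)) / ((k : ℝ) + 1) ^ p ≤
      (3 ^ p + 2 ^ p * ∑' k : ℕ, 1 / ((k : ℝ) + 1) ^ p) *
        ∑' l : ℕ, h (a + l) / ((a : ℝ) + l) ^ p := by
  set v : ℕ → ℝ := fun l => h (a + l) / ((a : ℝ) + l) ^ p
  have hv0 : 0 ≤ v := fun l => div_nonneg (h0 _) (by positivity)
  have hv : Summable v := by
    refine ((summable_nat_add_iff (a - 1)).mpr hsum).congr fun l => ?_
    rw [show l + (a - 1) + 1 = a + l by omega,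
      show ((l + (a - 1) : ℕ) : ℝ) + 1 = a + l by push_cast [Nat.cast_sub ha]; ring]
  have : NeZero a := ⟨by omega⟩
  have hblocks := hv.hasSum.sum_range_mul_add a
  have hfar : ∑' k : ℕ, ∑ i ∈ range a, v ((k + 1) * a + i) ≤ ∑' l, v l :=
    hblocks.tsum_eq ▸ tsum_comp_le_tsum_of_inj hblocks.summable
      (fun k => sum_nonneg fun i _ => hv0 _) Nat.succ_injective
  have hnear : ∑ i ∈ range a, v i ≤ ∑' l, v l := hv.sum_le_tsum _ fun i _ => hv0 i
  have hzeta : Summable fun k : ℕ => 1 / ((k : ℝ) + 1) ^ p := by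
    simpa using (summable_nat_add_iff 1).mpr (Real.summable_one_div_nat_rpow.mpr hp)
  have hfar_summable : Summable fun k : ℕ => 3 ^ p * ∑ i ∈ range a, v ((k + 1) * a + i) :=
    (hblocks.summable.comp_injective Nat.succ_injective).mul_left _
  have hnear_summable : Summable fun k : ℕ =>
      2 ^ p * (∑ i ∈ range a, v i) * (1 / ((k : ℝ) + 1) ^ p) :=
    hzeta.mul_left _
  have hbound := hfar_summable.add hnear_summable
  have hterm := mul_div_rpow_le_of_le_add h0 hsub (zero_le_one.trans hp.le) ha
  calc 1 / (a : ℝ) ^ (p - 1) * ∑' k : ℕ, h (a * (k + 1)) / ((k : ℝ) + 1) ^ p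
      = ∑' k : ℕ, 1 / (a : ℝ) ^ (p - 1) * (h (a * (k + 1)) / ((k : ℝ) + 1) ^ p) :=
        tsum_mul_left.symm
    _ ≤ ∑' k : ℕ, (3 ^ p * ∑ i ∈ range a, v ((k + 1) * a + i) +
          2 ^ p * (∑ i ∈ range a, v i) * (1 / ((k : ℝ) + 1) ^ p)) :=
        (hbound.of_nonneg_of_le (fun k => mul_nonneg (by positivity)
          (div_nonneg (h0 _) (by positivity))) hterm).tsum_le_tsum hterm hbound
    _ = 3 ^ p * ∑' k : ℕ, ∑ i ∈ range a, v ((k + 1) * a + i) +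
          2 ^ p * (∑ i ∈ range a, v i) * ∑' k : ℕ, 1 / ((k : ℝ) + 1) ^ p := by
        rw [hfar_summable.tsum_add hnear_summable, tsum_mul_left, tsum_mul_left]
    _ ≤ 3 ^ p * ∑' l, v l + 2 ^ p * (∑' l, v l) * ∑' k : ℕ, 1 / ((k : ℝ) + 1) ^ p := by
        gcongr
    _ = _ := by ring

end WeightedBlockSums

theorem stmt17_general
    {Ω : Type*} [m0 : MeasurableSpace Ω] {μ : Measure Ω} [IsProbabilityMeasure μ]
    (T : Ω ≃ᵐ Ω) (hT : MeasurePreserving T μ μ)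
    {F0 : MeasurableSpace Ω} (hF0 : F0 ≤ m0) (hF0T : F0 ≤ F0.comap T)
    {X0 : Ω → ℝ} (hX0L2 : MemLp X0 2 μ)
    (S : ℕ → Ω → ℝ) (hS : ∀ n ω, S n ω = ∑ i ∈ Finset.range n, X0 ((⇑T)^[i] ω))
    (hΔ : Summable fun n : ℕ =>
      (eLpNorm (μ[S (n + 1)|F0]) 2 μ).toReal / ((n : ℝ) + 1) ^ (3 / 2 : ℝ)) :
    ∃ c > (0 : ℝ), ∀ a : ℕ, 1 ≤ a →
      (1 / Real.sqrt a) *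
          ∑' k : ℕ, (eLpNorm (μ[S (a * (k + 1))|F0]) 2 μ).toReal
            / ((k : ℝ) + 1) ^ (3 / 2 : ℝ) ≤
        c * ∑' l : ℕ, (eLpNorm (μ[S (a + l)|F0]) 2 μ).toReal
            / ((a : ℝ) + l) ^ (3 / 2 : ℝ) := by
  obtain rfl : S = birkhoffSum T X0 := funext fun n => funext (hS n)
  refine ⟨3 ^ (3 / 2 : ℝ) + 2 ^ (3 / 2 : ℝ) * ∑' k : ℕ, 1 / ((k : ℝ) + 1) ^ (3 / 2 : ℝ),
    by positivity, fun a ha => ?_⟩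
  rw [show Real.sqrt a = (a : ℝ) ^ ((3 / 2 : ℝ) - 1) by rw [Real.sqrt_eq_rpow]; norm_num]
  exact tsum_mul_div_rpow_le_of_le_add (fun _ => ENNReal.toReal_nonneg)
    (toReal_eLpNorm_condExp_birkhoffSum_le hT hF0 hF0T one_le_two hX0L2) (by norm_num) hΔ ha

/-- (Subadditivity lemma.) If `∑_{n≥1} ‖E₀(S_n)‖/n^{3/2} < ∞`, then
there is a constant `c > 0` such that for every positive integer `a`,
`(1/√a) ∑_{k≥1} ‖E₀(S_{ak})‖/k^{3/2} ≤ c ∑_{l≥a} ‖E₀(S_l)‖/l^{3/2}`. -/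
theorem stmt17
    {Ω : Type*} [m0 : MeasurableSpace Ω] {μ : Measure Ω} [IsProbabilityMeasure μ]
    (T : Ω ≃ᵐ Ω) (hT : MeasurePreserving T μ μ)
    {F0 : MeasurableSpace Ω} (hF0 : F0 ≤ m0) (hF0T : F0 ≤ F0.comap T)
    {X0 : Ω → ℝ} (hX0m : StronglyMeasurable[F0] X0) (hX0L2 : MemLp X0 2 μ)
    (hX0c : ∫ ω, X0 ω ∂μ = 0)
    (S : ℕ → Ω → ℝ) (hS : ∀ n ω, S n ω = ∑ i ∈ Finset.range n, X0 ((⇑T)^[i] ω))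
    (hΔ : Summable fun n : ℕ =>
      (eLpNorm (μ[S (n + 1)|F0]) 2 μ).toReal / ((n : ℝ) + 1) ^ (3 / 2 : ℝ)) :
    ∃ c > (0 : ℝ), ∀ a : ℕ, 1 ≤ a →
      (1 / Real.sqrt a) *
          ∑' k : ℕ, (eLpNorm (μ[S (a * (k + 1))|F0]) 2 μ).toReal
            / ((k : ℝ) + 1) ^ (3 / 2 : ℝ) ≤
        c * ∑' l : ℕ, (eLpNorm (μ[S (a + l)|F0]) 2 μ).toReal
            / ((a : ℝ) + l) ^ (3 / 2 : ℝ) :=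
  stmt17_general (m0 := m0) T hT hF0 hF0T hX0L2 S hS hΔ
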